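/- Let x ∈ ℝ^c with 𝟙ᵀx = 0. Then for every t ∈ ℝ, | (x,0)ᵀ · U_N(t) · (x,0) | = | xᵀ · U_M(t) · x |. Consequently, for any constant 0 < C ≤ 1, x is C-sedentary in M if and only if (x,0) is C-sedentary in N. -/

import Mathlib

/-!
On the subspace `{(y, 0) : 𝟙ᵀy = 0}` the matrix `N` acts as `αI + M`: the lower block `Bᵀy`
vanishes because every row of `Bᵀ` is a multiple of `𝟙ᵀ`, and `αI + M` preserves `𝟙ᗮ` because
symmetry turns `M𝟙 = μ𝟙` into `𝟙ᵀM = μ𝟙ᵀ`. Comparing exponential series term by term gives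
`U_N(t)(x, 0) = (U_{αI+M}(t)x, 0) = e^{itα}(U_M(t)x, 0)`, and the phase `e^{itα}` has modulus one.
-/

open Matrix

/-- The transition matrix `U_R(t) = exp(i·t·R)` of a real square matrix `R`,
as a complex matrix. -/
noncomputable def U {ι : Type*} [Fintype ι] [DecidableEq ι]
    (R : Matrix ι ι ℝ) (t : ℝ) : Matrix ι ι ℂ :=
  NormedSpace.exp ((Complex.I * (t : ℂ)) • R.map (Complex.ofReal ·))

namespace Matrix

section SumZero

variable {ι κ R : Type*} [Fintype ι] [CommSemiring R]

theorem sum_mulVec_eq_zero_of_one_vecMul (K : Matrix ι ι R) {r : R} (hK : 1 ᵥ* K = r • 1)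
    {y : ι → R} (hy : ∑ i, y i = 0) : ∑ i, (K *ᵥ y) i = 0 := by
  rw [← one_dotProduct, dotProduct_mulVec, hK, smul_dotProduct, one_dotProduct, hy, smul_zero]

theorem transpose_mulVec_eq_zero_of_sum_eq_zero {B : Matrix ι κ R} {w : κ → R}
    (hB : ∀ i j, B i j = w j) {y : ι → R} (hy : ∑ i, y i = 0) : Bᵀ *ᵥ y = 0 := by
  funext j
  simp only [mulVec, dotProduct, transpose_apply, hB, ← Finset.mul_sum, hy, mul_zero,
    Pi.zero_apply]

end SumZero

section Exp

variable {𝕜 ι κ : Type*} [RCLike 𝕜] [Fintype ι] [DecidableEq ι] [Fintype κ] [DecidableEq κ]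

attribute [local instance] Matrix.linftyOpNormedRing Matrix.linftyOpNormedAlgebra

open scoped Nat in
theorem hasSum_exp_mulVec (A : Matrix ι ι 𝕜) (v : ι → 𝕜) :
    HasSum (fun n => (n !⁻¹ : 𝕜) • (A ^ n *ᵥ v)) (NormedSpace.exp A *ᵥ v) := by
  convert (NormedSpace.exp_series_hasSum_exp' (𝕂 := 𝕜) A).map (mulVec.addMonoidHomLeft v)
    (continuous_id.matrix_mulVec continuous_const) using 1
  · exact funext fun n => (smul_mulVec _ _ _).symm
  · rfl

theorem pow_mulVec_mulVec_of_mapsTo (A : Matrix κ κ 𝕜) (K : Matrix ι ι 𝕜) (P : Matrix κ ι 𝕜)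
    {W : Set (ι → 𝕜)} (hK : Set.MapsTo (K *ᵥ ·) W W)
    (hAP : ∀ y ∈ W, A *ᵥ (P *ᵥ y) = P *ᵥ (K *ᵥ y)) (n : ℕ) {x : ι → 𝕜} (hx : x ∈ W) :
    A ^ n *ᵥ (P *ᵥ x) = P *ᵥ (K ^ n *ᵥ x) := by
  induction n generalizing x with
  | zero => simp
  | succ n ih =>
    rw [pow_succ, pow_succ, ← mulVec_mulVec, ← mulVec_mulVec, hAP x hx, ih (hK hx)]

theorem exp_smul_mulVec_mulVec_of_mapsTo (A : Matrix κ κ 𝕜) (K : Matrix ι ι 𝕜)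
    (P : Matrix κ ι 𝕜) {W : Set (ι → 𝕜)} (hK : Set.MapsTo (K *ᵥ ·) W W)
    (hAP : ∀ y ∈ W, A *ᵥ (P *ᵥ y) = P *ᵥ (K *ᵥ y)) (z : 𝕜) {x : ι → 𝕜} (hx : x ∈ W) :
    NormedSpace.exp (z • A) *ᵥ (P *ᵥ x) = P *ᵥ (NormedSpace.exp (z • K) *ᵥ x) := by
  refine (hasSum_exp_mulVec _ _).unique ?_
  convert (hasSum_exp_mulVec (z • K) x).map (mulVecLin P).toAddMonoidHom
    (continuous_const.matrix_mulVec continuous_id) using 1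
  · funext n
    simp only [Function.comp_apply, LinearMap.toAddMonoidHom_coe, mulVecLin_apply, smul_pow,
      smul_mulVec, mulVec_smul, pow_mulVec_mulVec_of_mapsTo A K P hK hAP n hx]
  · rfl

theorem exp_smul_one (z : 𝕜) :
    NormedSpace.exp (z • (1 : Matrix ι ι 𝕜)) = NormedSpace.exp z • 1 := by
  rw [← Algebra.algebraMap_eq_smul_one, ← Algebra.algebraMap_eq_smul_one]
  exact (NormedSpace.algebraMap_exp_comm _).symm

end Exp

end Matrix

section Transition

variable {ι κ : Type*} [Fintype ι] [DecidableEq ι] [Fintype κ] [DecidableEq κ]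

theorem U_smul_one_add (α : ℝ) (M : Matrix ι ι ℝ) (t : ℝ) :
    U (α • 1 + M) t = Complex.exp (Complex.I * t * α) • U M t := by
  have hmap : (α • 1 + M).map (Complex.ofReal ·) = (α : ℂ) • 1 + M.map (Complex.ofReal ·) := by
    ext i j
    simp [Matrix.one_apply, apply_ite]
  rw [U, U, hmap, smul_add, smul_smul, exp_add_of_commute _ _ ((Commute.one_left _).smul_left _),
    exp_smul_one, Complex.exp_eq_exp_ℂ, smul_one_mul]

theorem U_fromBlocks_mulVec_sumElim_zero (M : Matrix ι ι ℝ) (hM : M.IsSymm) {μ : ℝ}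
    (hμ : M *ᵥ 1 = μ • 1) (α : ℝ) {w : κ → ℝ} {B : Matrix ι κ ℝ} (hB : ∀ i j, B i j = w j)
    (D : Matrix κ κ ℝ) (t : ℝ) {x : ι → ℂ} (hx : ∑ i, x i = 0) :
    U (fromBlocks (α • 1 + M) B Bᵀ D) t *ᵥ Sum.elim x 0 = Sum.elim (U (α • 1 + M) t *ᵥ x) 0 := by
  have hK : 1 ᵥ* (α • 1 + M).map (Complex.ofReal ·) = ((α + μ : ℝ) : ℂ) • 1 := by
    have hKℝ : 1 ᵥ* (α • 1 + M) = (α + μ) • 1 := by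
      rw [vecMul_add, vecMul_smul, vecMul_one, ← mulVec_transpose, hM.eq, hμ, add_smul]
    funext j
    have hKj := congrFun hKℝ j
    simp only [vecMul, dotProduct, Pi.one_apply, one_mul, map_apply, Pi.smul_apply,
      smul_eq_mul, mul_one] at hKj ⊢
    exact_mod_cast hKj
  have hembed : ∀ y : ι → ℂ, Sum.elim y (0 : κ → ℂ) = fromRows 1 0 *ᵥ y := by simp
  rw [U, U, hembed, hembed]
  refine exp_smul_mulVec_mulVec_of_mapsTo _ _ _ (W := {y | ∑ i, y i = 0}) ?_ ?_ _ hx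
  · exact fun y hy => sum_mulVec_eq_zero_of_one_vecMul _ hK hy
  · intro y (hy : ∑ i, y i = 0)
    have hBy : (B.map (Complex.ofReal ·))ᵀ *ᵥ y = 0 :=
      transpose_mulVec_eq_zero_of_sum_eq_zero (w := fun j => (w j : ℂ)) (by simp [hB]) hy
    rw [← hembed, ← hembed, fromBlocks_map, transpose_map, fromBlocks_mulVec]
    simp [hBy]

end Transition

theorem stmt4_general (c m : ℕ)
    (M : Matrix (Fin c) (Fin c) ℝ) (hM : M.IsSymm)
    (μ α : ℝ) (hμ : M *ᵥ (fun _ => (1 : ℝ)) = μ • fun _ => (1 : ℝ))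
    (w : Fin m → ℝ)
    (B : Matrix (Fin c) (Fin m) ℝ) (hB : ∀ i j, B i j = w j)
    (D : Matrix (Fin m) (Fin m) ℝ)
    (N : Matrix (Fin c ⊕ Fin m) (Fin c ⊕ Fin m) ℝ)
    (hN : N = Matrix.fromBlocks (α • (1 : Matrix (Fin c) (Fin c) ℝ) + M) B Bᵀ D)
    (x : Fin c → ℝ) (hx : ∑ i, x i = 0) :
    (∀ t : ℝ,
      ‖(Sum.elim (fun i => (x i : ℂ)) 0 ⬝ᵥ
            (U N t *ᵥ Sum.elim (fun i => (x i : ℂ)) 0))‖ =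
        ‖((fun i => (x i : ℂ)) ⬝ᵥ (U M t *ᵥ fun i => (x i : ℂ)))‖) ∧
      ∀ C : ℝ, 0 < C → C ≤ 1 →
        ((∀ t : ℝ, 0 < t →
            C ≤ ‖((fun i => (x i : ℂ)) ⬝ᵥ (U M t *ᵥ fun i => (x i : ℂ)))‖) ↔
          (∀ t : ℝ, 0 < t →
            C ≤ ‖(Sum.elim (fun i => (x i : ℂ)) 0 ⬝ᵥ
                (U N t *ᵥ Sum.elim (fun i => (x i : ℂ)) 0))‖)) := by
  set xℂ : Fin c → ℂ := fun i => (x i : ℂ)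
  have hxℂ : ∑ i, xℂ i = 0 := by simp only [xℂ, ← Complex.ofReal_sum, hx, Complex.ofReal_zero]
  have hnorm : ∀ t : ℝ,
      ‖Sum.elim xℂ 0 ⬝ᵥ (U N t *ᵥ Sum.elim xℂ 0)‖ = ‖xℂ ⬝ᵥ (U M t *ᵥ xℂ)‖ := by
    intro t
    rw [hN, U_fromBlocks_mulVec_sumElim_zero M hM hμ α hB D t hxℂ, sumElim_dotProduct_sumElim,
      dotProduct_zero, add_zero, U_smul_one_add, smul_mulVec, dotProduct_smul, smul_eq_mul,
      norm_mul, mul_assoc, ← Complex.ofReal_mul, Complex.norm_exp_I_mul_ofReal, one_mul]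
  exact ⟨hnorm, fun C _ _ => forall₂_congr fun t _ => by rw [hnorm]⟩

/-- For `x ∈ ℝ^c` with `𝟙ᵀx = 0`, for every `t ∈ ℝ`,
`|(x,0)ᵀ·U_N(t)·(x,0)| = |xᵀ·U_M(t)·x|`; consequently, for any `0 < C ≤ 1`,
`x` is `C`-sedentary in `M` iff `(x,0)` is `C`-sedentary in `N`. -/
theorem stmt4 (c m : ℕ) (hc : 1 ≤ c)
    (M : Matrix (Fin c) (Fin c) ℝ) (hM : M.IsSymm)
    (μ α : ℝ) (hμ : M *ᵥ (fun _ => (1 : ℝ)) = μ • fun _ => (1 : ℝ))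
    (w : Fin m → ℝ)
    (B : Matrix (Fin c) (Fin m) ℝ) (hB : ∀ i j, B i j = w j)
    (D : Matrix (Fin m) (Fin m) ℝ) (hD : D.IsSymm)
    (N : Matrix (Fin c ⊕ Fin m) (Fin c ⊕ Fin m) ℝ)
    (hN : N = Matrix.fromBlocks (α • (1 : Matrix (Fin c) (Fin c) ℝ) + M) B Bᵀ D)
    (x : Fin c → ℝ) (hx : ∑ i, x i = 0) :
    (∀ t : ℝ,
      ‖(Sum.elim (fun i => (x i : ℂ)) 0 ⬝ᵥ
            (U N t *ᵥ Sum.elim (fun i => (x i : ℂ)) 0))‖ =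
        ‖((fun i => (x i : ℂ)) ⬝ᵥ (U M t *ᵥ fun i => (x i : ℂ)))‖) ∧
      ∀ C : ℝ, 0 < C → C ≤ 1 →
        ((∀ t : ℝ, 0 < t →
            C ≤ ‖((fun i => (x i : ℂ)) ⬝ᵥ (U M t *ᵥ fun i => (x i : ℂ)))‖) ↔
          (∀ t : ℝ, 0 < t →
            C ≤ ‖(Sum.elim (fun i => (x i : ℂ)) 0 ⬝ᵥ
                (U N t *ᵥ Sum.elim (fun i => (x i : ℂ)) 0))‖)) :=
  stmt4_general c m M hM μ α hμ w B hB D N hN x hx
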